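/- arXiv:1506.04059 — 4 statements merged into one kernel-verified Lean document; each statement's English description precedes it below -/
import Mathlib

section
/- Let σ be a monoid endomorphism of the free monoid X* over a finite set X of variables (a substitution), and suppose there is a constant k such that for every i ≥ 1 and every X ∈ X, the word σ^i(X) has length at most k·|X| (σ is k-bounded under iteration). Define a relation ⋖ on X by X ⋖ Y iff there exists i ≥ 1 such that X occurs in σ^i(Y). Then ⋖ is antisymmetric on distinct variables: for distinct X, Y, if X ⋖ Y then not Y ⋖ X, provided additionally that the monoid generated by σ under composition is aperiodic. -/
/-!
Counting occurrences turns composition of substitutions into multiplication of occurrence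
matrices over `ℕ`, so aperiodicity says `M ^ n = M ^ (n + 1)` for the occurrence matrix `M`
of `σ`; then `N := M ^ n` is idempotent and equals every `M ^ m` with `m ≥ n`.
If `x ⋖ y` and `y ⋖ x`, the two variables lie on a common cycle, so the entries `xx`, `yy`
and `xy` of large powers of `M`, hence of `N`, are positive. But then
`N x y = ∑ z, N x z * N z y ≥ N x x * N x y + N x y * N y y ≥ 2 * N x y > N x y`.
-/

/-- Number of occurrences of the variable `x` in a word of the free monoid. -/
def occFM {V : Type*} [DecidableEq V] (w : FreeMonoid V) (x : V) : ℕ :=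
  (FreeMonoid.toList w).count x

/-- `x ⋖ y`: the variable `x` flows into `y`, i.e. `x` occurs in `σ^i(y)` for
some `i ≥ 1`. -/
def FlowsInto {V : Type*} [DecidableEq V] (σ : Monoid.End (FreeMonoid V))
    (x y : V) : Prop :=
  ∃ i ≥ 1, 0 < occFM ((σ ^ i) (FreeMonoid.of y)) x

open Finset

theorem pow_eq_pow_of_pow_succ_eq {M : Type*} [Monoid M] {a : M} {n m : ℕ}
    (h : a ^ n = a ^ (n + 1)) (hm : n ≤ m) : a ^ m = a ^ n := by
  obtain ⟨c, rfl⟩ := Nat.exists_eq_add_of_le hm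
  induction c with
  | zero => rfl
  | succ c ih => rw [← add_assoc, pow_succ, ih (by omega), ← pow_succ, ← h]

section Occurrences

variable {V : Type*} [DecidableEq V]

lemma occFM_one (x : V) : occFM (1 : FreeMonoid V) x = 0 := rfl

lemma occFM_mul (u v : FreeMonoid V) (x : V) :
    occFM (u * v) x = occFM u x + occFM v x := by
  simp [occFM, FreeMonoid.toList_mul, List.count_append]

lemma occFM_of (x y : V) : occFM (FreeMonoid.of y) x = if x = y then 1 else 0 := by
  simp [occFM, FreeMonoid.toList_of, List.count_singleton, eq_comm (a := y)]

variable [Fintype V]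

lemma occFM_map (φ : FreeMonoid V →* FreeMonoid V) (w : FreeMonoid V) (x : V) :
    occFM (φ w) x = ∑ z, occFM (φ (FreeMonoid.of z)) x * occFM w z := by
  induction w using FreeMonoid.inductionOn' with
  | one => simp [occFM_one]
  | of_mul a w ih =>
    simp only [map_mul, occFM_mul, occFM_of, ih, mul_add, sum_add_distrib, mul_ite, mul_one,
      mul_zero, sum_ite_eq', mem_univ, if_true]

def occMatrix : Monoid.End (FreeMonoid V) →* Matrix V V ℕ where
  toFun φ := Matrix.of fun x y => occFM (φ (FreeMonoid.of y)) x
  map_one' := by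
    ext x y
    simp [occFM_of, Matrix.one_apply]
  map_mul' φ ψ := by
    ext x y
    simp only [Matrix.of_apply, Monoid.End.coe_mul, Function.comp_apply, Matrix.mul_apply]
    exact occFM_map φ _ x

lemma occMatrix_apply (φ : Monoid.End (FreeMonoid V)) (x y : V) :
    occMatrix φ x y = occFM (φ (FreeMonoid.of y)) x := rfl

end Occurrences

section NatMatrix

variable {V : Type*} [Fintype V]

lemma Matrix.mul_apply_le_nat (A B : Matrix V V ℕ) (x z y : V) :
    A x z * B z y ≤ (A * B) x y :=
  Matrix.mul_apply (M := A) ▸ single_le_sum (f := fun z => A x z * B z y)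
    (fun _ _ => Nat.zero_le _) (mem_univ z)

variable [DecidableEq V]

lemma Matrix.pow_apply_self_pos_nat {A : Matrix V V ℕ} {x : V} (hA : 0 < A x x) (t : ℕ) :
    0 < (A ^ t) x x := by
  induction t with
  | zero => simp
  | succ t ih =>
    rw [pow_succ]
    exact (Nat.mul_pos ih hA).trans_le (Matrix.mul_apply_le_nat _ _ x x x)

lemma Matrix.apply_eq_zero_of_isIdempotentElem_nat {N : Matrix V V ℕ} (hN : IsIdempotentElem N)
    {x y : V} (hxy : x ≠ y) (hx : 0 < N x x) (hy : 0 < N y y) : N x y = 0 := by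
  have hpair : N x x * N x y + N x y * N y y ≤ N x y := by
    calc N x x * N x y + N x y * N y y = ∑ z ∈ {x, y}, N x z * N z y :=
          (sum_pair (f := fun z => N x z * N z y) hxy).symm
      _ ≤ ∑ z, N x z * N z y := sum_le_sum_of_subset (subset_univ _)
      _ = N x y := by rw [← Matrix.mul_apply, hN.eq]
  nlinarith

theorem Matrix.pow_apply_eq_zero_of_pow_eq_pow_succ_nat {M : Matrix V V ℕ} {n : ℕ} (hM : M ^ n = M ^ (n + 1)) {x y : V} (hxy : x ≠ y) {i : ℕ}
    (hi : 0 < (M ^ i) x y) (j : ℕ) : (M ^ j) y x = 0 := by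
  rw [← Nat.le_zero, ← not_lt]
  intro hj
  set N := M ^ n
  have hstable : ∀ m, n ≤ m → M ^ m = N := fun m hm => pow_eq_pow_of_pow_succ_eq hM hm
  have hidem : IsIdempotentElem N := by
    rw [IsIdempotentElem, ← pow_add, hstable _ (by omega)]
  have hi0 : i ≠ 0 := by
    rintro rfl
    simp [Matrix.one_apply_ne hxy] at hi
  have hxx : 0 < (M ^ (i + j)) x x := by
    rw [pow_add]
    exact (Nat.mul_pos hi hj).trans_le (Matrix.mul_apply_le_nat _ _ x y x)
  have hyy : 0 < (M ^ (i + j)) y y := by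
    rw [add_comm, pow_add]
    exact (Nat.mul_pos hj hi).trans_le (Matrix.mul_apply_le_nat _ _ y x y)
  have hcycle : (M ^ (i + j)) ^ n = N := by
    rw [← pow_mul]
    exact hstable _ (Nat.le_mul_of_pos_left n (by omega))
  have hdiag : ∀ z, 0 < (M ^ (i + j)) z z → 0 < N z z := fun z hz =>
    hcycle ▸ Matrix.pow_apply_self_pos_nat hz n
  have hNxy : 0 < N x y :=
    calc 0 < (M ^ i) x y * N y y := Nat.mul_pos hi (hdiag y hyy)
      _ ≤ (M ^ i * N) x y := Matrix.mul_apply_le_nat _ _ x y y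
      _ = N x y := by rw [← pow_add, hstable _ (by omega)]
  exact hNxy.ne' (Matrix.apply_eq_zero_of_isIdempotentElem_nat hidem hxy (hdiag x hxx) (hdiag y hyy))

end NatMatrix

theorem flow_antisymm_general {V : Type*} [Fintype V] [DecidableEq V]
    (σ : Monoid.End (FreeMonoid V))
    (haper : ∃ n : ℕ, ∀ x y : V,
      occFM ((σ ^ n) (FreeMonoid.of y)) x = occFM ((σ ^ (n + 1)) (FreeMonoid.of y)) x) :
    ∀ x y : V, x ≠ y → FlowsInto σ x y → ¬ FlowsInto σ y x := by
  obtain ⟨n, hn⟩ := haper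
  have hM : occMatrix σ ^ n = occMatrix σ ^ (n + 1) := by
    ext x y
    simp only [← map_pow, occMatrix_apply, hn]
  rintro x y hxy ⟨i, -, hi⟩ ⟨j, -, hj⟩
  rw [← occMatrix_apply, map_pow] at hi hj
  exact hj.ne' (Matrix.pow_apply_eq_zero_of_pow_eq_pow_succ_nat hM hxy hi j)

/-- Let `σ` be a substitution (an endomorphism of the free monoid over a finite
variable set `V`) that is `k`-bounded under iteration, and whose generated
monoid is aperiodic in the sense that the occurrence-count matrices of `σ^n`
and `σ^(n+1)` agree for some `n`. Then the flow relation `⋖` is antisymmetric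
on distinct variables: for distinct `x, y`, if `x ⋖ y` then not `y ⋖ x`. -/
theorem flow_antisymm {V : Type*} [Fintype V] [DecidableEq V]
    (σ : Monoid.End (FreeMonoid V)) (k : ℕ)
    (hbound : ∀ i ≥ 1, ∀ x y : V, occFM ((σ ^ i) (FreeMonoid.of y)) x ≤ k)
    (haper : ∃ n : ℕ, ∀ x y : V,
      occFM ((σ ^ n) (FreeMonoid.of y)) x = occFM ((σ ^ (n + 1)) (FreeMonoid.of y)) x) :
    ∀ x y : V, x ≠ y → FlowsInto σ x y → ¬ FlowsInto σ y x :=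
  flow_antisymm_general σ haper
end

section
/- Let σ be an endomorphism of the free monoid X* over a finite variable set X of size ℓ, such that all iterates σ^i are k-linear (every variable occurs at most k times in σ^i(Y) for each Y), and suppose the occurrence-count matrices of σ satisfy M(σ)^n = M(σ)^(n+1). If X occurs in σ(X) and σ(X) ≠ X, i.e., some variable Y ≠ X occurs in σ(X), then σ^(kℓ)(Y) = ε (the empty word). -/
namespace FreeMonoid

variable {α β : Type*}

theorem length_hom_apply_eq_sum (F : FreeMonoid α →* FreeMonoid β) (w : FreeMonoid α) :
    (F w).length = ((toList w).map fun a ↦ (F (of a)).length).sum := by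
  induction w using FreeMonoid.inductionOn' with
  | one => simp [length_one]
  | of_mul a w ih => simp [length_mul, ih]

theorem length_apply_of_add_length_apply_of_le (F : FreeMonoid α →* FreeMonoid β)
    {w : FreeMonoid α} {a b : α} (hab : a ≠ b) (ha : a ∈ w) (hb : b ∈ w) :
    (F (of a)).length + (F (of b)).length ≤ (F w).length := by
  classical
  have hperm := List.perm_cons_erase (show a ∈ toList w from ha)
  have hb' : b ∈ (toList w).erase a := (List.mem_erase_of_ne hab.symm).mpr hb
  rw [length_hom_apply_eq_sum F w, (hperm.map _).sum_eq, List.map_cons, List.sum_cons]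
  exact Nat.add_le_add_left
    (List.le_sum_of_mem (List.mem_map_of_mem (f := fun c ↦ (F (of c)).length) hb')) _

theorem length_le_mul_card [Fintype α] [DecidableEq α] {w : FreeMonoid α} {k : ℕ}
    (h : ∀ a, occFM w a ≤ k) : w.length ≤ k * Fintype.card α := by
  calc w.length = ∑ a, occFM w a := by
        simpa [occFM, FreeMonoid.length] using (Multiset.sum_count_eq_card (s := Finset.univ)
          (m := (toList w : Multiset α)) (by simp)).symm
    _ ≤ Fintype.card α • k := Finset.sum_le_card_nsmul _ _ _ fun a _ ↦ h a
    _ = k * Fintype.card α := by rw [smul_eq_mul, mul_comm]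

variable {σ : Monoid.End (FreeMonoid α)}

theorem pow_apply_eq_one_of_le {w : FreeMonoid α} {i j : ℕ} (hij : i ≤ j)
    (h : (σ ^ i) w = 1) : (σ ^ j) w = 1 := by
  obtain ⟨d, rfl⟩ := Nat.exists_eq_add_of_le' hij
  rw [pow_add, Monoid.End.coe_mul, Function.comp_apply, h, map_one]

theorem length_pow_succ_apply_ge {a b : α} (hab : a ≠ b) (ha : a ∈ σ (of a))
    (hb : b ∈ σ (of a)) (i : ℕ) :
    ((σ ^ i) (of a)).length + ((σ ^ i) (of b)).length ≤ ((σ ^ (i + 1)) (of a)).length := by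
  rw [pow_succ, Monoid.End.coe_mul, Function.comp_apply]
  exact length_apply_of_add_length_apply_of_le (σ ^ i) hab ha hb

theorem add_two_le_length_pow_succ_apply {a b : α} (hab : a ≠ b) (ha : a ∈ σ (of a))
    (hb : b ∈ σ (of a)) {m : ℕ} (hm : (σ ^ m) (of b) ≠ 1) :
    m + 2 ≤ ((σ ^ (m + 1)) (of a)).length := by
  have hgrow := length_pow_succ_apply_ge hab ha hb
  have hb_pos (i : ℕ) (hi : i ≤ m) : 1 ≤ ((σ ^ i) (of b)).length :=
    Nat.one_le_iff_ne_zero.mpr fun h ↦ hm (pow_apply_eq_one_of_le hi (length_eq_zero.mp h))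
  induction m with
  | zero => simpa [length_of] using hgrow 0
  | succ m ih =>
    have := ih (fun h ↦ hm (pow_apply_eq_one_of_le m.le_succ h))
      fun i hi ↦ hb_pos i (by omega)
    have := hgrow (m + 1)
    have := hb_pos (m + 1) le_rfl
    omega

end FreeMonoid

theorem copies_die_out_general {V : Type*} [Fintype V] [DecidableEq V]
    (σ : Monoid.End (FreeMonoid V)) (k : ℕ)
    (hbound : ∀ i ≥ 1, ∀ x y : V, occFM ((σ ^ i) (FreeMonoid.of y)) x ≤ k)
    (x y : V) (hxy : y ≠ x)
    (hx : 0 < occFM (σ (FreeMonoid.of x)) x)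
    (hy : 0 < occFM (σ (FreeMonoid.of x)) y) :
    (σ ^ (k * Fintype.card V)) (FreeMonoid.of y) = 1 := by
  by_contra hne
  have hlower := FreeMonoid.add_two_le_length_pow_succ_apply hxy.symm
    (List.count_pos_iff.mp hx) (List.count_pos_iff.mp hy) hne
  have hupper := FreeMonoid.length_le_mul_card (hbound (k * Fintype.card V + 1) (by omega) · x)
  omega

/-- Let `σ` be an endomorphism of the free monoid over a finite variable set `V`
of size `ℓ`, whose iterates are all `k`-linear, and whose occurrence-count
matrix `M` satisfies `M ^ n = M ^ (n+1)`. If `x` occurs in `σ(x)` together with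
another variable `y ≠ x`, then `σ^(k·ℓ)(y)` is the empty word. -/
theorem copies_die_out {V : Type*} [Fintype V] [DecidableEq V]
    (σ : Monoid.End (FreeMonoid V)) (k n : ℕ)
    (hbound : ∀ i ≥ 1, ∀ x y : V, occFM ((σ ^ i) (FreeMonoid.of y)) x ≤ k)
    (M : Matrix V V ℕ)
    (hM : ∀ x y : V, M x y = occFM (σ (FreeMonoid.of y)) x)
    (haper : M ^ n = M ^ (n + 1))
    (x y : V) (hxy : y ≠ x)
    (hx : 0 < occFM (σ (FreeMonoid.of x)) x)
    (hy : 0 < occFM (σ (FreeMonoid.of x)) y) :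
    (σ ^ (k * Fintype.card V)) (FreeMonoid.of y) = 1 :=
  copies_die_out_general σ k hbound x y hxy hx hy
end

section
/- The number of rooted forests over a finite set Q of size n (forests of rooted trees with vertices nonempty subsets of Q, disjoint roots, and children of each vertex pairwise disjoint proper subsets of that vertex) is at most (2n)^(2n-2) / (n-2)! for n ≥ 2. -/
/-- `s` is a child of `t` in the forest with vertex set `V`: `s ⊊ t` and no
vertex lies strictly between them. -/
def ChildRel {Q : Type*} (V : Finset (Finset Q)) (s t : Finset Q) : Prop :=
  s ∈ V ∧ t ∈ V ∧ s ⊂ t ∧ ¬ ∃ u ∈ V, s ⊂ u ∧ u ⊂ t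

/-- A vertex set `V` of nonempty subsets of `Q` is a rooted forest if its roots
(maximal vertices) are pairwise disjoint and the children of every vertex are
pairwise disjoint (children are proper subsets of their parent by definition
of `ChildRel`). Such a forest is determined by its vertex set. -/
def IsForest {Q : Type*} (V : Finset (Finset Q)) : Prop :=
  (∀ s ∈ V, s.Nonempty) ∧
  (∀ s ∈ V, ∀ t ∈ V, (¬ ∃ u ∈ V, s ⊂ u) → (¬ ∃ u ∈ V, t ⊂ u) → s ≠ t →
      Disjoint s t) ∧
  (∀ t ∈ V, ∀ s₁ s₂ : Finset Q, ChildRel V s₁ t → ChildRel V s₂ t → s₁ ≠ s₂ →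
      Disjoint s₁ s₂)

open Finset
open scoped Nat

/-!
A forest is determined by its vertex set, which is a laminar family: its singletons (at most
`2 ^ n` choices) together with a laminar family of sets of size at least two. Such a family `F`
on `insert x S` is recovered from its trace `G` on `S` (erase `x`, drop the sets that become too
small), the set `a = s₀ \ {x}` for the smallest member `s₀` containing `x`, and one bit saying
whether `a` itself is a member: the members containing `x` are the `insert x t` with `a ⊆ t ∈ G`.
As `a` is empty, a singleton of `S` or a member of `G`, and `#G ≤ #S`, this leaves at most
`3 #S + 1` choices, so there are at most `∏ k < n, (3k + 1)` laminar families on `n` points. The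
bound follows from `2 ^ n * ∏ k < n, (3k + 1) * (n - 2)! ≤ (2n) ^ (2n - 2)`, an induction on `n`
driven by `2 m ^ m ≤ (m + 1) ^ m`.
-/

section LaminarFamilies

variable {α : Type*}

lemma exists_childRel_of_ssubset {V : Finset (Finset α)} {s r : Finset α} (hs : s ∈ V)
    (hr : r ∈ V) (hsr : s ⊂ r) : ∃ c, ChildRel V c r ∧ s ⊆ c := by
  classical
  obtain ⟨c, hsc, hc⟩ :=
    {u ∈ V | s ⊆ u ∧ u ⊂ r}.exists_le_maximal (mem_filter.2 ⟨hs, subset_rfl, hsr⟩)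
  obtain ⟨hcV, -, hcr⟩ := mem_filter.1 hc.prop
  refine ⟨c, ⟨hcV, hr, hcr, ?_⟩, hsc⟩
  rintro ⟨u, hu, hcu, hur⟩
  exact hc.not_gt (mem_filter.2 ⟨hu, hsc.trans hcu.subset, hur⟩) hcu

lemma exists_maximal_superset {V : Finset (Finset α)} {s : Finset α} (hs : s ∈ V) :
    ∃ r ∈ V, s ⊆ r ∧ ¬∃ u ∈ V, r ⊂ u := by
  classical
  obtain ⟨r, hsr, hr⟩ := {u ∈ V | s ⊆ u}.exists_le_maximal (mem_filter.2 ⟨hs, subset_rfl⟩)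
  refine ⟨r, (mem_filter.1 hr.prop).1, hsr, ?_⟩
  rintro ⟨u, hu, hru⟩
  exact hr.not_gt (mem_filter.2 ⟨hu, hsr.trans hru.subset⟩) hru

lemma IsForest.subset_or_subset_of_subset {V : Finset (Finset α)} (hV : IsForest V)
    {r : Finset α} (hr : r ∈ V) {s t : Finset α} (hs : s ∈ V) (ht : t ∈ V) (hsr : s ⊆ r)
    (htr : t ⊆ r) (hst : ¬Disjoint s t) : s ⊆ t ∨ t ⊆ s := by
  induction r using Finset.strongInduction with
  | H r ih =>
    obtain rfl | hsr := LE.le.eq_or_ssubset hsr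
    · exact Or.inr htr
    obtain rfl | htr := LE.le.eq_or_ssubset htr
    · exact Or.inl hsr.subset
    obtain ⟨c, hc, hsc⟩ := exists_childRel_of_ssubset hs hr hsr
    obtain ⟨d, hd, htd⟩ := exists_childRel_of_ssubset ht hr htr
    obtain rfl | hcd := eq_or_ne c d
    · exact ih c hc.2.2.1 hc.1 hsc htd
    · exact absurd ((hV.2.2 r hr c d hc hd hcd).mono hsc htd) hst

def IsLaminar (F : Finset (Finset α)) : Prop :=
  ∀ s ∈ F, ∀ t ∈ F, ¬Disjoint s t → s ⊆ t ∨ t ⊆ s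

lemma IsForest.isLaminar {V : Finset (Finset α)} (hV : IsForest V) : IsLaminar V := by
  intro s hs t ht hst
  obtain ⟨r, hr, hsr, hr_max⟩ := exists_maximal_superset hs
  obtain ⟨r', hr', htr', hr'_max⟩ := exists_maximal_superset ht
  obtain rfl | hrr' := eq_or_ne r r'
  · exact hV.subset_or_subset_of_subset hr hs ht hsr htr' hst
  · exact absurd ((hV.2.1 r hr r' hr' hr_max hr'_max hrr').mono hsr htr') hst

lemma IsLaminar.mono {F G : Finset (Finset α)} (hF : IsLaminar F) (hGF : G ⊆ F) : IsLaminar G :=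
  fun s hs t ht => hF s (hGF hs) t (hGF ht)

variable [DecidableEq α]

instance : DecidablePred (IsLaminar (α := α)) := fun _ => by unfold IsLaminar; infer_instance

def laminarFamilies (S : Finset α) : Finset (Finset (Finset α)) :=
  {F ∈ {s ∈ S.powerset | 2 ≤ #s}.powerset | IsLaminar F}

lemma mem_laminarFamilies {S : Finset α} {F : Finset (Finset α)} :
    F ∈ laminarFamilies S ↔ (∀ s ∈ F, s ⊆ S ∧ 2 ≤ #s) ∧ IsLaminar F := by
  simp [laminarFamilies, subset_iff]

lemma laminarFamilies_empty : laminarFamilies (∅ : Finset α) = {∅} := by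
  ext F
  simp only [mem_laminarFamilies, subset_empty, mem_singleton]
  refine ⟨fun h => eq_empty_of_forall_notMem fun s hs => ?_, ?_⟩
  · obtain ⟨rfl, h2⟩ := h.1 s hs
    simp at h2
  · rintro rfl
    exact ⟨by simp, by simp [IsLaminar]⟩

namespace Laminar

variable {x : α} {S : Finset α} {F : Finset (Finset α)} {a : Finset α}

def shrink (x : α) (F : Finset (Finset α)) : Finset (Finset α) :=
  {t ∈ F.image (·.erase x) | 2 ≤ #t}

lemma shrink_mem_laminarFamilies (hF : F ∈ laminarFamilies (insert x S)) :
    shrink x F ∈ laminarFamilies S := by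
  obtain ⟨hsub, hlam⟩ := mem_laminarFamilies.1 hF
  refine mem_laminarFamilies.2 ⟨fun t ht => ?_, fun t ht t' ht' htt' => ?_⟩
  · obtain ⟨ht, h2⟩ := mem_filter.1 ht
    obtain ⟨s, hs, rfl⟩ := mem_image.1 ht
    exact ⟨(erase_subset_erase x (hsub s hs).1).trans (erase_insert_subset x S), h2⟩
  · obtain ⟨s, hs, rfl⟩ := mem_image.1 (mem_filter.1 ht).1
    obtain ⟨s', hs', rfl⟩ := mem_image.1 (mem_filter.1 ht').1
    have hss' : ¬Disjoint s s' := fun h => htt' (h.mono (erase_subset x s) (erase_subset x s'))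
    exact (hlam s hs s' hs' hss').imp (erase_subset_erase x) (erase_subset_erase x)

lemma shrink_eq_self (hF : ∀ s ∈ F, 2 ≤ #s)
    (hx : ∀ s ∈ F, x ∉ s) : shrink x F = F := by
  have : F.image (·.erase x) = F := by
    conv_rhs => rw [← image_id (s := F)]
    exact image_congr fun s hs => erase_eq_of_notMem (hx s hs)
  rw [shrink, this, filter_true_of_mem hF]

def lift (x : α) (a t : Finset α) : Finset α := if a.Nonempty ∧ a ⊆ t then insert x t else t

-- In the rebuilt family, `insert x a` is the least member containing `x` (`a = ∅` if there is
-- none), and `b` records whether `a` is a member as well.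
def extend (x : α) (G : Finset (Finset α)) (a : Finset α) (b : Bool) : Finset (Finset α) :=
  G.image (lift x a) ∪ if a.Nonempty then {if b then a else insert x a} else ∅

lemma extend_empty (x : α) (G : Finset (Finset α)) (b : Bool) : extend x G ∅ b = G := by
  have : lift x (∅ : Finset α) = id := funext fun _ => by simp [lift]
  simp [extend, this]

lemma card_extend_le (x : α) (G : Finset (Finset α)) (a : Finset α) (b : Bool) :
    #(extend x G a b) ≤ #G + 1 := by
  have : #(if a.Nonempty then {if b then a else insert x a} else ∅ : Finset (Finset α)) ≤ 1 := by
    split_ifs <;> simp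
  exact (card_union_le _ _).trans (add_le_add card_image_le this)

def anchors (S : Finset α) (G : Finset (Finset α)) : Finset (Finset α × Bool) :=
  (insert ∅ (S.image singleton)) ×ˢ {false} ∪ G ×ˢ univ

lemma card_anchors_le (S : Finset α) (G : Finset (Finset α)) :
    #(anchors S G) ≤ #S + 1 + 2 * #G := by
  have : #(insert ∅ (S.image singleton) : Finset (Finset α)) ≤ #S + 1 :=
    (card_insert_le _ _).trans (Nat.add_le_add_right card_image_le 1)
  calc #(anchors S G)
      ≤ #((insert ∅ (S.image singleton)) ×ˢ {false}) + #(G ×ˢ (univ : Finset Bool)) :=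
        card_union_le _ _
    _ ≤ #S + 1 + 2 * #G := by
        rw [card_product, card_product, card_singleton, card_univ, Fintype.card_bool]
        omega

lemma eq_of_subset_of_notMem (hlam : IsLaminar F) (hs₀ : insert x a ∈ F) (ha : a.Nonempty)
    {u : Finset α} (hu : u ∈ F) (hxu : x ∉ u) (hau : a ⊆ u) : u = a := by
  obtain ⟨y, hy⟩ := ha
  rcases hlam _ hs₀ u hu (not_disjoint_iff.2 ⟨y, mem_insert_of_mem hy, hau hy⟩) with h | h
  · exact absurd (h (mem_insert_self x a)) hxu
  · exact ((subset_insert_iff_of_notMem hxu).1 h).antisymm hau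

lemma lift_erase_eq (hlam : IsLaminar F) (hleast : IsLeast {u | u ∈ F ∧ x ∈ u} (insert x a))
    (hxa : x ∉ a) (ha : a.Nonempty) {u : Finset α} (hu : u ∈ F) (hua : u ≠ a) :
    lift x a (u.erase x) = u := by
  by_cases hxu : x ∈ u
  · have hau : a ⊆ u.erase x :=
      subset_erase.2 ⟨(subset_insert x a).trans (hleast.2 ⟨hu, hxu⟩), hxa⟩
    rw [lift, if_pos ⟨ha, hau⟩, insert_erase hxu]
  · rw [erase_eq_of_notMem hxu, lift, if_neg]
    exact fun h => hua (eq_of_subset_of_notMem hlam hleast.1.1 ha hu hxu h.2)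

lemma extend_shrink_subset (hF : F ∈ laminarFamilies (insert x S))
    (hleast : IsLeast {u | u ∈ F ∧ x ∈ u} (insert x a)) (hxa : x ∉ a) (ha : a.Nonempty) :
    extend x (shrink x F) a (decide (a ∈ F)) ⊆ F := by
  have hlam := (mem_laminarFamilies.1 hF).2
  intro u hu
  simp only [extend, if_pos ha, mem_union, mem_image, mem_singleton, shrink, mem_filter] at hu
  rcases hu with ⟨_, ⟨⟨v, hv, rfl⟩, -⟩, rfl⟩ | rfl
  · by_cases hva : v = a
    · subst hva
      rw [erase_eq_of_notMem hxa, lift, if_pos ⟨ha, subset_rfl⟩]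
      exact hleast.1.1
    · rwa [lift_erase_eq hlam hleast hxa ha hv hva]
  · by_cases haF : a ∈ F <;> simp [haF, hleast.1.1]

lemma subset_extend_shrink (hF : F ∈ laminarFamilies (insert x S))
    (hleast : IsLeast {u | u ∈ F ∧ x ∈ u} (insert x a)) (hxa : x ∉ a) (ha : a.Nonempty) :
    F ⊆ extend x (shrink x F) a (decide (a ∈ F)) := by
  obtain ⟨hsub, hlam⟩ := mem_laminarFamilies.1 hF
  intro u hu
  simp only [extend, if_pos ha, mem_union, mem_image, mem_singleton, shrink, mem_filter]
  by_cases hua : u = a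
  · subst hua
    simp [hu]
  by_cases hcard_u : 2 ≤ #(u.erase x)
  · exact Or.inl ⟨u.erase x, ⟨⟨u, hu, rfl⟩, hcard_u⟩, lift_erase_eq hlam hleast hxa ha hu hua⟩
  have hxu : x ∈ u := by
    by_contra hxu
    rw [erase_eq_of_notMem hxu] at hcard_u
    exact hcard_u (hsub u hu).2
  have hu_eq : insert x a = u := eq_of_subset_of_card_le (hleast.2 ⟨hu, hxu⟩)
    (by rw [← card_erase_add_one hxu]; have := (hsub _ hleast.1.1).2; omega)
  subst hu_eq
  rw [erase_insert hxa] at hcard_u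
  have haF : a ∉ F := fun haF => hcard_u (hsub a haF).2
  simp [haF]

lemma extend_shrink_eq (hF : F ∈ laminarFamilies (insert x S))
    (hleast : IsLeast {u | u ∈ F ∧ x ∈ u} (insert x a)) (hxa : x ∉ a) :
    extend x (shrink x F) a (decide (a ∈ F)) = F := by
  have h2 := (mem_laminarFamilies.1 hF).1 _ hleast.1.1
  have ha : a.Nonempty := card_pos.1 (by rw [card_insert_of_notMem hxa] at h2; omega)
  exact (extend_shrink_subset hF hleast hxa ha).antisymm (subset_extend_shrink hF hleast hxa ha)

lemma exists_mem_anchors_extend_shrink_eq (hF : F ∈ laminarFamilies (insert x S)) :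
    ∃ p ∈ anchors S (shrink x F), extend x (shrink x F) p.1 p.2 = F := by
  obtain ⟨hsub, hlam⟩ := mem_laminarFamilies.1 hF
  by_cases hxF : ∃ s ∈ F, x ∈ s
  swap
  · simp only [not_exists, not_and] at hxF
    exact ⟨(∅, false), by simp [anchors],
      by rw [extend_empty, shrink_eq_self (fun s hs => (hsub s hs).2) hxF]⟩
  obtain ⟨s₀, hs₀_min⟩ := {s ∈ F | x ∈ s}.exists_minimal (by simpa [Finset.Nonempty] using hxF)
  obtain ⟨hs₀, hx⟩ := mem_filter.1 hs₀_min.prop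
  have hleast : IsLeast {u | u ∈ F ∧ x ∈ u} s₀ := ⟨⟨hs₀, hx⟩, fun u ⟨hu, hxu⟩ =>
    (hlam s₀ hs₀ u hu (not_disjoint_iff.2 ⟨x, hx, hxu⟩)).elim id fun h =>
      (hs₀_min.eq_of_le (mem_filter.2 ⟨hu, hxu⟩) h).symm ▸ subset_rfl⟩
  rw [← insert_erase hx] at hleast
  refine ⟨(s₀.erase x, decide (s₀.erase x ∈ F)), ?_,
    extend_shrink_eq hF hleast (notMem_erase x s₀)⟩
  by_cases h2 : 2 ≤ #(s₀.erase x)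
  · exact mem_union_right _ (mem_product.2 ⟨mem_filter.2 ⟨mem_image_of_mem _ hs₀, h2⟩, mem_univ _⟩)
  · have hF_erase : s₀.erase x ∉ F := fun h => h2 (hsub _ h).2
    refine mem_union_left _ (mem_product.2 ⟨?_, by simp [hF_erase]⟩)
    obtain h | h : #(s₀.erase x) = 0 ∨ #(s₀.erase x) = 1 := by omega
    · simp [card_eq_zero.1 h]
    · obtain ⟨y, hy⟩ := card_eq_one.1 h
      have hyS : y ∈ S := by
        obtain ⟨hyx, hys₀⟩ := mem_erase.1 (hy ▸ mem_singleton_self y)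
        exact (mem_insert.1 ((hsub s₀ hs₀).1 hys₀)).resolve_left hyx
      simp [hy, hyS]

end Laminar

open Laminar

lemma card_le_of_mem_laminarFamilies {S : Finset α} {F : Finset (Finset α)}
    (hF : F ∈ laminarFamilies S) : #F ≤ #S := by
  induction S using Finset.induction_on generalizing F with
  | empty => simp_all [laminarFamilies_empty]
  | insert x S hxS ih =>
    obtain ⟨p, -, hp⟩ := exists_mem_anchors_extend_shrink_eq hF
    calc #F = #(extend x (shrink x F) p.1 p.2) := by rw [hp]
      _ ≤ #(shrink x F) + 1 := card_extend_le _ _ _ _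
      _ ≤ #S + 1 := by gcongr; exact ih (shrink_mem_laminarFamilies hF)
      _ = #(insert x S) := (card_insert_of_notMem hxS).symm

lemma card_laminarFamilies_insert_le (x : α) (S : Finset α) :
    #(laminarFamilies (insert x S)) ≤ (3 * #S + 1) * #(laminarFamilies S) := by
  have hcover : laminarFamilies (insert x S) ⊆ (laminarFamilies S).biUnion
      fun G => (anchors S G).image fun p => extend x G p.1 p.2 := by
    intro F hF
    obtain ⟨p, hp, hpF⟩ := exists_mem_anchors_extend_shrink_eq hF
    exact mem_biUnion.2 ⟨_, shrink_mem_laminarFamilies hF, mem_image.2 ⟨p, hp, hpF⟩⟩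
  calc #(laminarFamilies (insert x S))
      ≤ ∑ G ∈ laminarFamilies S, #((anchors S G).image fun p => extend x G p.1 p.2) :=
        (card_le_card hcover).trans card_biUnion_le
    _ ≤ ∑ _G ∈ laminarFamilies S, (3 * #S + 1) := sum_le_sum fun G hG =>
        card_image_le.trans <| (card_anchors_le S G).trans <| by
          have := card_le_of_mem_laminarFamilies hG; omega
    _ = (3 * #S + 1) * #(laminarFamilies S) := by rw [sum_const, smul_eq_mul, mul_comm]

lemma card_laminarFamilies_le (S : Finset α) :
    #(laminarFamilies S) ≤ ∏ k ∈ range #S, (3 * k + 1) := by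
  induction S using Finset.induction_on with
  | empty => simp [laminarFamilies_empty]
  | insert x S hx ih =>
    rw [card_insert_of_notMem hx, prod_range_succ, mul_comm]
    exact (card_laminarFamilies_insert_le x S).trans (Nat.mul_le_mul_left _ ih)

lemma card_forests_le_two_pow_mul [Fintype α] :
    Nat.card {V : Finset (Finset α) // IsForest V} ≤
      2 ^ Fintype.card α * #(laminarFamilies (univ : Finset α)) := by
  classical
  let split (V : Finset (Finset α)) := ({s ∈ V | #s < 2}, {s ∈ V | 2 ≤ #s})
  have hmaps {V : Finset (Finset α)} (hV : IsForest V) :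
      split V ∈ (univ.image singleton).powerset ×ˢ laminarFamilies univ := by
    refine mem_product.2 ⟨mem_powerset.2 fun s hs => ?_, mem_laminarFamilies.2
      ⟨fun s hs => ⟨subset_univ s, (mem_filter.1 hs).2⟩, hV.isLaminar.mono (filter_subset _ V)⟩⟩
    obtain ⟨hsV, hs1⟩ := mem_filter.1 hs
    obtain ⟨a, rfl⟩ := card_eq_one.1 (show #s = 1 by have := (hV.1 s hsV).card_pos; omega)
    exact mem_image_of_mem _ (mem_univ a)
  have hinj : split.Injective := by
    intro V W h
    simp only [split, Prod.mk.injEq, Finset.ext_iff, mem_filter] at h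
    ext s
    by_cases hs : #s < 2
    · simpa [hs] using h.1 s
    · simpa [show 2 ≤ #s by omega] using h.2 s
  rw [Nat.card_eq_fintype_card, Fintype.card_subtype]
  calc #{V | IsForest V} ≤ #((univ.image singleton).powerset ×ˢ laminarFamilies univ) :=
        card_le_card_of_injOn split (fun V hV => hmaps (mem_filter.1 hV).2) hinj.injOn
    _ = 2 ^ Fintype.card α * #(laminarFamilies (univ : Finset α)) := by
        rw [card_product, card_powerset, card_image_of_injective _ singleton_injective, card_univ]

end LaminarFamilies

lemma two_mul_pow_self_le_succ_pow {m : ℕ} (hm : m ≠ 0) : 2 * m ^ m ≤ (m + 1) ^ m := by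
  have hm' : (m : ℚ) ≠ 0 := by exact_mod_cast hm
  have h := one_add_mul_le_pow (a := (1 / m : ℚ))
    (by linarith [show (0 : ℚ) ≤ 1 / m by positivity]) m
  rw [mul_one_div_cancel hm', one_add_div hm', div_pow, le_div_iff₀ (by positivity)] at h
  exact_mod_cast (by linarith : (2 * m ^ m : ℚ) ≤ (m + 1) ^ m)

lemma two_pow_mul_prod_mul_factorial_le (m : ℕ) :
    2 ^ (m + 2) * (∏ k ∈ range (m + 2), (3 * k + 1)) * m ! ≤ (2 * m + 4) ^ (2 * m + 2) := by
  induction m with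
  | zero => simp [prod_range_succ]
  | succ m ih =>
    calc 2 ^ (m + 3) * (∏ k ∈ range (m + 3), (3 * k + 1)) * (m + 1)!
        = 2 ^ (m + 2) * (∏ k ∈ range (m + 2), (3 * k + 1)) * m ! * (2 * (3 * m + 7) * (m + 1)) := by
          rw [prod_range_succ _ (m + 2), Nat.factorial_succ]; ring
      _ ≤ (2 * m + 4) ^ (2 * m + 2) * (2 * (2 * m + 4) ^ 2) := by
          exact Nat.mul_le_mul ih (by nlinarith)
      _ = 2 * (2 * m + 4) ^ (2 * m + 4) := by ring
      _ ≤ (2 * m + 5) ^ (2 * m + 4) := two_mul_pow_self_le_succ_pow (by omega)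
      _ ≤ (2 * (m + 1) + 4) ^ (2 * (m + 1) + 2) := by
          rw [show 2 * (m + 1) + 2 = 2 * m + 4 by ring]
          exact Nat.pow_le_pow_left (by omega) _

/-- The number of rooted forests over a finite set `Q` of size `n ≥ 2` is at
most `(2n)^(2n-2) / (n-2)!`. -/
theorem card_forests_le {Q : Type*} [Fintype Q] [DecidableEq Q] (n : ℕ)
    (hn : 2 ≤ n) (hcard : Fintype.card Q = n) :
    Nat.card {V : Finset (Finset Q) // IsForest V} ≤
      (2 * n) ^ (2 * n - 2) / Nat.factorial (n - 2) := by
  obtain ⟨m, rfl⟩ := Nat.exists_eq_add_of_le' hn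
  rw [Nat.le_div_iff_mul_le (Nat.factorial_pos _), show 2 * (m + 2) - 2 = 2 * m + 2 by omega,
    Nat.add_sub_cancel]
  calc Nat.card {V : Finset (Finset Q) // IsForest V} * m !
      ≤ 2 ^ (m + 2) * (∏ k ∈ range (m + 2), (3 * k + 1)) * m ! := by
        gcongr
        calc Nat.card {V : Finset (Finset Q) // IsForest V}
            ≤ 2 ^ (m + 2) * #(laminarFamilies (univ : Finset Q)) :=
              hcard ▸ card_forests_le_two_pow_mul
          _ ≤ 2 ^ (m + 2) * ∏ k ∈ range (m + 2), (3 * k + 1) := by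
              gcongr
              simpa [hcard] using card_laminarFamilies_le (univ : Finset Q)
    _ ≤ (2 * m + 4) ^ (2 * m + 2) := two_pow_mul_prod_mul_factorial_le m
    _ = (2 * (m + 2)) ^ (2 * m + 2) := by ring
end

section
/- The substitution transition monoid of an SST surjects onto its flow transition monoid: the map sending f_u (the function p ↦ (q, σ̃_r) recording the target state and the variable-flow substitution of the run r over u from p) to the flow matrix m_u is a surjective monoid homomorphism; hence the flow transition monoid divides the substitution transition monoid, and aperiodicity of the substitution transition monoid implies aperiodicity of the flow transition monoid. -/
/-- A deterministic streaming string transducer (transition structure). -/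
structure SST (A B Q X : Type*) where
  delta : Q → A → Q
  rho : Q → A → X → List (B ⊕ X)

/-- Homomorphic extension of a substitution to words over `B ∪ X`. -/
def applyS {X B : Type*} (σ : X → List (B ⊕ X)) (w : List (B ⊕ X)) :
    List (B ⊕ X) :=
  w.flatMap (Sum.elim (fun b => [Sum.inl b]) σ)

/-- Composition of substitutions: `(σ₁σ₂)(x) = σ̂₁(σ₂ x)`. -/
def compS {X B : Type*} (σ₁ σ₂ : X → List (B ⊕ X)) : X → List (B ⊕ X) :=
  fun x => applyS σ₁ (σ₂ x)

/-- The run of an SST from state `p` over word `u`: final state together with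
the induced substitution. -/
def SST.run {A B Q X : Type*} (T : SST A B Q X) (p : Q) (u : List A) :
    Q × (X → List (B ⊕ X)) :=
  u.foldl (fun s a => (T.delta s.1 a, compS s.2 (T.rho s.1 a)))
    (p, fun x => [Sum.inr x])

/-- The `n`-th power `u^n` of a word. -/
def wpow {A : Type*} (u : List A) (n : ℕ) : List A :=
  (List.replicate n u).flatten

/-! Erasing the output letters keeps the occurrences of every variable, so the flow matrix
`m_u` is a function of `f_u`; aperiodicity passes along any such function. -/

theorem List.count_filterMap_getRight? {B X : Type*} [DecidableEq B] [DecidableEq X]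
    (l : List (B ⊕ X)) (x : X) :
    (l.filterMap Sum.getRight?).count x = l.count (Sum.inr x) := by
  rw [List.count_filterMap, List.count_eq_countP]
  congr 1
  funext a
  cases a <;> rfl

namespace SST

variable {A B Q X : Type*} (T : SST A B Q X)

/-- The element `f_u` of the substitution transition monoid. -/
def substTransition (u : List A) (p : Q) : Q × (X → List X) :=
  ((T.run p u).1, fun y => ((T.run p u).2 y).filterMap Sum.getRight?)

/-- The element `m_u` of the flow transition monoid, with `none` for `⊥`. -/
def flowMatrix [DecidableEq Q] [DecidableEq X] [DecidableEq B] (u : List A) :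
    Q × X → Q × X → Option ℕ
  | (p, x), (q, y) =>
    if (T.run p u).1 = q then some (((T.run p u).2 y).count (Sum.inr x)) else none

theorem flowMatrix_eq_of_substTransition_eq [DecidableEq Q] [DecidableEq X] [DecidableEq B]
    {u v : List A} (h : T.substTransition u = T.substTransition v) :
    T.flowMatrix u = T.flowMatrix v := by
  funext ⟨p, x⟩ ⟨q, y⟩
  obtain ⟨hstate, hsubst⟩ := Prod.mk.inj (congrFun h p)
  have hcount : ((T.run p u).2 y).count (Sum.inr x) = ((T.run p v).2 y).count (Sum.inr x) := by
    rw [← List.count_filterMap_getRight?, ← List.count_filterMap_getRight?]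
    exact congrArg (List.count x) (congrFun hsubst y)
  simp only [flowMatrix, hstate, hcount]

end SST

theorem stm_surjects_onto_ftm_general {A B Q X : Type*}
    [DecidableEq Q] [DecidableEq X] [DecidableEq B]
    (T : SST A B Q X)
    (stm : List A → Q → Q × (X → List X))
    (hstm : ∀ u p, stm u p =
      ((T.run p u).1, fun y => ((T.run p u).2 y).filterMap Sum.getRight?))
    (flowMat : List A → (Q × X) → (Q × X) → Option ℕ)
    (hflow : ∀ u p x q y, flowMat u (p, x) (q, y) =
      if (T.run p u).1 = q then some (((T.run p u).2 y).count (Sum.inr x))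
      else none) :
    (∀ u v : List A, stm u = stm v → flowMat u = flowMat v) ∧
    ((∃ n : ℕ, ∀ u : List A, stm (wpow u n) = stm (wpow u (n + 1))) →
      ∃ n : ℕ, ∀ u : List A, flowMat (wpow u n) = flowMat (wpow u (n + 1))) := by
  obtain rfl : stm = T.substTransition := funext fun u => funext (hstm u)
  obtain rfl : flowMat = T.flowMatrix :=
    funext fun u => funext fun (p, x) => funext fun (q, y) => hflow u p x q y
  exact ⟨fun _ _ => T.flowMatrix_eq_of_substTransition_eq,
    fun ⟨n, hn⟩ => ⟨n, fun u => T.flowMatrix_eq_of_substTransition_eq (hn u)⟩⟩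

/-- The substitution transition monoid surjects onto the flow transition
monoid: the map `f_u ↦ m_u` is well defined (the element of the substitution
transition monoid determines the flow matrix), so the flow transition monoid
divides the substitution transition monoid; consequently, aperiodicity of the
substitution transition monoid implies aperiodicity of the flow transition
monoid. -/
theorem stm_surjects_onto_ftm {A B Q X : Type*}
    [Fintype Q] [Fintype X] [DecidableEq Q] [DecidableEq X] [DecidableEq B]
    (T : SST A B Q X)
    (stm : List A → Q → Q × (X → List X))
    (hstm : ∀ u p, stm u p =
      ((T.run p u).1, fun y => ((T.run p u).2 y).filterMap Sum.getRight?))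
    (flowMat : List A → (Q × X) → (Q × X) → Option ℕ)
    (hflow : ∀ u p x q y, flowMat u (p, x) (q, y) =
      if (T.run p u).1 = q then some (((T.run p u).2 y).count (Sum.inr x))
      else none) :
    (∀ u v : List A, stm u = stm v → flowMat u = flowMat v) ∧
    ((∃ n : ℕ, ∀ u : List A, stm (wpow u n) = stm (wpow u (n + 1))) →
      ∃ n : ℕ, ∀ u : List A, flowMat (wpow u n) = flowMat (wpow u (n + 1))) :=
  stm_surjects_onto_ftm_general T stm hstm flowMat hflow
end
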